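/- arXiv:2004.02576 — 3 statements merged into one kernel-verified Lean document; each statement's English description precedes it below -/
import Mathlib

section
/- For every real numbers $s$, $t$ and every $p > 1$, if $T_k(x) = x + k$ for $x \le -k$, $T_k(x) = 0$ for $-k < x < k$, and $T_k(x) = x - k$ for $x \ge k$ (with $k > 0$), then $|s-t|^{p-2}(s-t)(T_k(s)-T_k(t)) \ge |T_k(s)-T_k(t)|^{p}$. -/
/-!
Both `T_k` and `x ↦ x - T_k x` are nondecreasing, so `s - t` and `T_k s - T_k t` have the same
sign and `|T_k s - T_k t| ≤ |s - t|`. Writing `a = |s - t|`, `b = |T_k s - T_k t|`, the right-hand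
side is `a ^ (p - 1) * b`, and `b ^ p = b ^ (p - 1) * b ≤ a ^ (p - 1) * b` because `p ≥ 1`.
-/

theorem rpow_le_rpow_sub_two_mul_mul {a b p : ℝ} (hp : 1 ≤ p) (hb : 0 ≤ b) (hba : b ≤ a) :
    b ^ p ≤ a ^ (p - 2) * a * b := by
  rcases hb.eq_or_lt with rfl | hb
  · rw [Real.zero_rpow (by linarith), mul_zero]
  have ha : a ≠ 0 := (hb.trans_le hba).ne'
  calc b ^ p = b ^ (p - 1) * b := by rw [← Real.rpow_add_one hb.ne']; ring_nf
    _ ≤ a ^ (p - 1) * b := by gcongr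
    _ = a ^ (p - 2) * a * b := by rw [← Real.rpow_add_one ha]; ring_nf

theorem abs_rpow_le_abs_rpow_sub_two_mul_mul {x y p : ℝ} (hp : 1 ≤ p) (hxy : 0 ≤ x * y)
    (hyx : |y| ≤ |x|) : |y| ^ p ≤ |x| ^ (p - 2) * x * y := by
  rw [mul_assoc, ← abs_of_nonneg hxy, abs_mul, ← mul_assoc]
  exact rpow_le_rpow_sub_two_mul_mul hp (abs_nonneg y) hyx

theorem Monotone.mul_sub_nonneg {f : ℝ → ℝ} (hf : Monotone f) (x y : ℝ) :
    0 ≤ (x - y) * (f x - f y) := by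
  rcases le_total x y with h | h
  · exact mul_nonneg_of_nonpos_of_nonpos (by linarith) (by linarith [hf h])
  · exact mul_nonneg (by linarith) (by linarith [hf h])

theorem abs_sub_le_of_monotone_of_monotone_id_sub {f : ℝ → ℝ} (hf : Monotone f)
    (hg : Monotone fun x ↦ x - f x) (x y : ℝ) : |f x - f y| ≤ |x - y| := by
  wlog h : y ≤ x generalizing x y
  · rw [abs_sub_comm, abs_sub_comm x]; exact this y x (le_of_not_ge h)
  rw [abs_of_nonneg (sub_nonneg.2 (hf h)), abs_of_nonneg (sub_nonneg.2 h)]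
  linarith [hg h]

noncomputable def truncation (k x : ℝ) : ℝ := if x ≤ -k then x + k else if x < k then 0 else x - k

theorem truncation_monotone (k : ℝ) : Monotone (truncation k) := by
  intro x y hxy
  dsimp only [truncation]
  split_ifs <;> linarith

theorem id_sub_truncation_monotone {k : ℝ} (hk : 0 ≤ k) : Monotone fun x ↦ x - truncation k x := by
  intro x y hxy
  dsimp only [truncation]
  split_ifs <;> linarith

theorem truncation_inequality (p k s t : ℝ) (hp : 1 < p) (hk : 0 < k)
    (T : ℝ → ℝ)
    (hT : ∀ x : ℝ, T x = if x ≤ -k then x + k else if x < k then 0 else x - k) :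
    |T s - T t| ^ p ≤ |s - t| ^ (p - 2) * (s - t) * (T s - T t) := by
  obtain rfl : T = truncation k := funext hT
  exact abs_rpow_le_abs_rpow_sub_two_mul_mul hp.le ((truncation_monotone k).mul_sub_nonneg s t)
    (abs_sub_le_of_monotone_of_monotone_id_sub (truncation_monotone k)
      (id_sub_truncation_monotone hk.le) s t)
end

section
/- For all real numbers $x, y$ and every $p > 1$, writing $u^- = \min(u,0)$, it holds that $|x^- - y^-|^p \le |x-y|^{p-2}(x-y)(x^- - y^-)$. -/
/-! Truncation `u ↦ min u 0` is monotone and `1`-Lipschitz, so with `a = x⁻ - y⁻` the product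
`(x - y) a` equals `|x - y| |a|` and `|a| ≤ |x - y|`. The inequality then reduces to
`s ^ p ≤ t ^ (p - 1) s` for `0 ≤ s ≤ t`, which is monotonicity of `r ↦ r ^ (p - 1)`. -/

theorem Real.rpow_le_rpow_sub_two_mul_self_mul {s t p : ℝ} (hs : 0 ≤ s) (hst : s ≤ t)
    (hp : 1 < p) : s ^ p ≤ t ^ (p - 2) * t * s := by
  have hp₁ : p - 1 + 1 ≠ 0 := by linarith
  have hp₂ : p - 2 + 1 ≠ 0 := by linarith
  calc s ^ p = s ^ (p - 1) * s := by
        rw [← Real.rpow_add_one' hs hp₁, sub_add_cancel]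
    _ ≤ t ^ (p - 1) * s := by gcongr
    _ = t ^ (p - 2) * t * s := by
        rw [← Real.rpow_add_one' (hs.trans hst) hp₂]; ring_nf

theorem abs_min_zero_sub_min_zero_le (x y : ℝ) : |min x 0 - min y 0| ≤ |x - y| := by
  simpa using abs_min_sub_min_le_max x 0 y 0

theorem sub_mul_min_zero_sub_min_zero_nonneg (x y : ℝ) :
    0 ≤ (x - y) * (min x 0 - min y 0) :=
  (monotone_id.monovary fun _ _ h ↦ min_le_min_right 0 h).sub_mul_sub_nonneg y x

theorem neg_part_inequality (p x y : ℝ) (hp : 1 < p) :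
    |min x 0 - min y 0| ^ p ≤ |x - y| ^ (p - 2) * (x - y) * (min x 0 - min y 0) := by
  have hprod : (x - y) * (min x 0 - min y 0) = |x - y| * |min x 0 - min y 0| := by
    rw [← abs_mul, abs_of_nonneg (sub_mul_min_zero_sub_min_zero_nonneg x y)]
  rw [mul_assoc, hprod, ← mul_assoc]
  exact Real.rpow_le_rpow_sub_two_mul_self_mul (abs_nonneg _)
    (abs_min_zero_sub_min_zero_le x y) hp
end

section
/- Let $p > 1$, $k > 1$ and $p - 1 < \tau < p$. Then there exists a constant $C = C(k, \tau, p) > 0$ such that for all real numbers $a, b$: $|a+b|^p \le k|a|^p + |b|^p + C|a|^{p-\tau}|b|^{\tau}$. -/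
/-!
Put `x = |a|`, `y = |b|` and `1 + δ = k ^ (1 / p)`. If `y ≤ δ x`, then `(x + y) ^ p ≤ k x ^ p`.
Otherwise convexity of `t ↦ t ^ p` gives `(x + y) ^ p ≤ y ^ p + p (x + y) ^ (p - 1) x`, and in this
regime `x + y ≲ y` and `x ≤ x ^ (p - τ) (y / δ) ^ (τ - p + 1)`, so the error term is
`≲ x ^ (p - τ) y ^ τ`; the exponent `τ - p + 1` is positive because `p - 1 < τ`.
-/

open Real

theorem add_rpow_le_rpow_add_mul {x y p : ℝ} (hx : 0 ≤ x) (hy : 0 ≤ y) (hp : 1 ≤ p) :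
    (x + y) ^ p ≤ y ^ p + p * (x + y) ^ (p - 1) * x := by
  rcases hx.eq_or_lt with rfl | hx
  · simp
  have h := (convexOn_rpow hp).slope_le_of_hasDerivAt (x := y) (y := x + y) hy
    (by simp only [Set.mem_Ici]; positivity) (by linarith) (hasDerivAt_rpow_const (Or.inr hp))
  rw [slope_def_field, add_sub_cancel_right, div_le_iff₀ hx] at h
  linarith

theorem add_rpow_le_of_le_mul {x y δ p : ℝ} (hx : 0 ≤ x) (hy : 0 ≤ y) (hδ : 0 ≤ δ)
    (hyx : y ≤ δ * x) (hp : 0 ≤ p) : (x + y) ^ p ≤ (1 + δ) ^ p * x ^ p := by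
  rw [← mul_rpow (by positivity) hx]
  exact rpow_le_rpow (by positivity) (by linarith) hp

theorem le_rpow_mul_rpow_of_mul_le {x y δ s : ℝ} (hx : 0 ≤ x) (hδ : 0 < δ) (hxy : δ * x ≤ y)
    (hs : 0 ≤ s) : x ≤ δ ^ (-s) * x ^ (1 - s) * y ^ s := by
  have hy : 0 ≤ y := le_trans (by positivity) hxy
  rcases hx.eq_or_lt with rfl | hx
  · positivity
  calc x = x ^ (1 - s) * x ^ s := by rw [← rpow_add hx, sub_add_cancel, rpow_one]
    _ ≤ x ^ (1 - s) * (y / δ) ^ s := by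
      gcongr
      rw [le_div_iff₀ hδ]
      linarith
    _ = δ ^ (-s) * x ^ (1 - s) * y ^ s := by
      rw [div_rpow hy hδ.le, rpow_neg hδ.le]
      ring

theorem add_rpow_le_rpow_add_mul_rpow_mul_rpow {x y δ p τ : ℝ} (hx : 0 ≤ x) (hy : 0 ≤ y)
    (hδ : 0 < δ) (hxy : δ * x ≤ y) (hp : 1 ≤ p) (hτ : p - 1 < τ) :
    (x + y) ^ p ≤ y ^ p + p * (1 + δ⁻¹) ^ (p - 1) * δ ^ (p - 1 - τ) * x ^ (p - τ) * y ^ τ := by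
  have hx_le : x ≤ δ⁻¹ * y := by
    rw [inv_mul_eq_div, le_div_iff₀ hδ]
    linarith
  have hsum : (x + y) ^ (p - 1) ≤ (1 + δ⁻¹) ^ (p - 1) * y ^ (p - 1) := by
    rw [← mul_rpow (by positivity) hy]
    exact rpow_le_rpow (by positivity) (by linarith) (by linarith)
  have hsplit := le_rpow_mul_rpow_of_mul_le hx hδ hxy (s := τ - (p - 1)) (by linarith)
  rw [neg_sub, show 1 - (τ - (p - 1)) = p - τ by ring] at hsplit
  have hy_pow : y ^ (p - 1) * y ^ (τ - (p - 1)) = y ^ τ := by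
    rw [← rpow_add' hy (by linarith), add_sub_cancel]
  calc (x + y) ^ p ≤ y ^ p + p * (x + y) ^ (p - 1) * x := add_rpow_le_rpow_add_mul hx hy hp
    _ ≤ y ^ p + p * ((1 + δ⁻¹) ^ (p - 1) * y ^ (p - 1)) *
          (δ ^ (p - 1 - τ) * x ^ (p - τ) * y ^ (τ - (p - 1))) := by
      gcongr
    _ = y ^ p + p * (1 + δ⁻¹) ^ (p - 1) * δ ^ (p - 1 - τ) * x ^ (p - τ) * y ^ τ := by
      rw [← hy_pow]
      ring

theorem add_rpow_le_mul_rpow_add_rpow_add_mul_rpow_mul_rpow {x y δ p τ : ℝ} (hx : 0 ≤ x)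
    (hy : 0 ≤ y) (hδ : 0 < δ) (hp : 1 ≤ p) (hτ : p - 1 < τ) :
    (x + y) ^ p ≤ (1 + δ) ^ p * x ^ p + y ^ p +
      p * (1 + δ⁻¹) ^ (p - 1) * δ ^ (p - 1 - τ) * x ^ (p - τ) * y ^ τ := by
  have hp0 : 0 ≤ p := by linarith
  rcases le_total y (δ * x) with hyx | hxy
  · have hsmall := add_rpow_le_of_le_mul hx hy hδ.le hyx hp0
    have : 0 ≤ p * (1 + δ⁻¹) ^ (p - 1) * δ ^ (p - 1 - τ) * x ^ (p - τ) * y ^ τ := by positivity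
    have : 0 ≤ y ^ p := by positivity
    linarith
  · have hlarge := add_rpow_le_rpow_add_mul_rpow_mul_rpow hx hy hδ hxy hp hτ
    have : 0 ≤ (1 + δ) ^ p * x ^ p := by positivity
    linarith

theorem power_sum_estimate_general (p k τ : ℝ) (hp : 1 < p) (hk : 1 < k)
    (hτ1 : p - 1 < τ) :
    ∃ C : ℝ, 0 < C ∧ ∀ a b : ℝ,
      |a + b| ^ p ≤ k * |a| ^ p + |b| ^ p + C * |a| ^ (p - τ) * |b| ^ τ := by
  set δ := k ^ p⁻¹ - 1
  have hδ : 0 < δ := sub_pos.2 (one_lt_rpow hk (by positivity))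
  have hk_eq : (1 + δ) ^ p = k := by
    rw [add_sub_cancel, ← rpow_mul (by linarith), inv_mul_cancel₀ (by positivity), rpow_one]
  refine ⟨p * (1 + δ⁻¹) ^ (p - 1) * δ ^ (p - 1 - τ), by positivity, fun a b => ?_⟩
  calc |a + b| ^ p ≤ (|a| + |b|) ^ p :=
        rpow_le_rpow (abs_nonneg _) (abs_add_le a b) (by linarith)
    _ ≤ _ := by
      rw [← hk_eq]
      exact add_rpow_le_mul_rpow_add_rpow_add_mul_rpow_mul_rpow (abs_nonneg a) (abs_nonneg b)
        hδ hp.le hτ1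

theorem power_sum_estimate (p k τ : ℝ) (hp : 1 < p) (hk : 1 < k)
    (hτ1 : p - 1 < τ) (hτ2 : τ < p) :
    ∃ C : ℝ, 0 < C ∧ ∀ a b : ℝ,
      |a + b| ^ p ≤ k * |a| ^ p + |b| ^ p + C * |a| ^ (p - τ) * |b| ^ τ :=
  power_sum_estimate_general p k τ hp hk hτ1
end
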